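/- The map x ↦ x·ψ₊⁻¹(C/x) is monotone increasing on (0,∞) for any fixed constant C > 0, where ψ₊⁻¹ is the right branch inverse of ψ(ζ) = ζ - 1 - log ζ. -/

import Mathlib

/-!
Write `a = ψ₊⁻¹(C/x)`, so that `ψ a = C/x` and hence `x · a = C / (ψ a / a)`. As `x` grows, `C/x`
decreases, so `a` decreases, and so does `ψ a / a` because `ψ(t)/t` is monotone on `[1, ∞)`;
therefore `C / (ψ a / a)` increases. Both monotonicity facts reduce to `log u ≤ u - 1`
applied at `u = t / s`.
-/

open Set Real

noncomputable def psi (t : ℝ) : ℝ := t - 1 - log t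

lemma MonotoneOn.of_strictMonoOn_rightInverse {α β : Type*} [LinearOrder α] [Preorder β]
    {f : α → β} {g : β → α} {s : Set α} {t : Set β} (hf : StrictMonoOn f s) (hg : MapsTo g t s)
    (hfg : ∀ y ∈ t, f (g y) = y) : MonotoneOn g t := by
  intro y hy z hz hyz
  rwa [← hf.le_iff_le (hg hy) (hg hz), hfg y hy, hfg z hz]

lemma log_div_lt_of_one_le_of_lt {s t : ℝ} (hs : 1 ≤ s) (hst : s < t) : log (t / s) < t - s := by
  have hs0 : 0 < s := by linarith
  calc log (t / s) < t / s - 1 := log_lt_sub_one_of_pos (div_pos (by linarith) hs0) (by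
          rw [Ne, div_eq_one_iff_eq hs0.ne']; exact hst.ne')
    _ = (t - s) / s := by field_simp
    _ ≤ t - s := div_le_self (by linarith) hs

lemma psi_strictMonoOn : StrictMonoOn psi (Ici 1) := by
  intro s hs t ht hst
  have hs0 : 0 < s := lt_of_lt_of_le one_pos hs
  have hlog := log_div_lt_of_one_le_of_lt hs hst
  rw [log_div (by linarith) hs0.ne'] at hlog
  unfold psi
  linarith

lemma psi_div_self_monotoneOn : MonotoneOn (fun t => psi t / t) (Ici 1) := by
  intro s hs t ht hst
  have hs0 : 0 < s := lt_of_lt_of_le one_pos hs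
  have ht0 : 0 < t := lt_of_lt_of_le one_pos ht
  dsimp only
  rw [div_le_div_iff₀ hs0 ht0]
  have hlog : s * log (t / s) ≤ t - s := by
    have := mul_le_mul_of_nonneg_left (log_le_sub_one_of_pos (div_pos ht0 hs0)) hs0.le
    rwa [mul_sub, mul_div_cancel₀ t hs0.ne', mul_one] at this
  rw [log_div ht0.ne' hs0.ne'] at hlog
  have hlog_s : 0 ≤ (t - s) * log s := mul_nonneg (by linarith) (log_nonneg hs)
  unfold psi
  nlinarith

lemma mul_eq_div_psi_div_self {C x a : ℝ} (hC : C ≠ 0) (hx : x ≠ 0) (ha : a ≠ 0)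
    (h : psi a = C / x) : x * a = C / (psi a / a) := by
  rw [h]
  field_simp

/-- The map `x ↦ x·ψ₊⁻¹(C/x)` is monotone increasing on `(0,∞)` for any fixed `C > 0`,
where `ψ₊⁻¹` is the right-branch inverse of `ψ(ζ) = ζ - 1 - log ζ`. -/
theorem stmt_7 (ψinv : ℝ → ℝ)
    (hψinv : ∀ ξ : ℝ, 0 ≤ ξ →
      1 ≤ ψinv ξ ∧ ψinv ξ - 1 - Real.log (ψinv ξ) = ξ)
    (C : ℝ) (hC : 0 < C) :
    MonotoneOn (fun x : ℝ => x * ψinv (C / x)) (Set.Ioi 0) := by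
  have hψinv_mono : MonotoneOn ψinv (Ici 0) :=
    .of_strictMonoOn_rightInverse psi_strictMonoOn (fun ξ hξ => (hψinv ξ hξ).1)
      (fun ξ hξ => (hψinv ξ hξ).2)
  intro x (hx : 0 < x) y (hy : 0 < y) hxy
  have hCx : 0 < C / x := div_pos hC hx
  have hCy : 0 < C / y := div_pos hC hy
  obtain ⟨ha1, hψa⟩ := hψinv _ hCx.le
  obtain ⟨hb1, hψb⟩ := hψinv _ hCy.le
  have hba : ψinv (C / y) ≤ ψinv (C / x) :=
    hψinv_mono hCy.le hCx.le (div_le_div_of_nonneg_left hC.le hx hxy)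
  have hquot_pos : 0 < psi (ψinv (C / y)) / ψinv (C / y) := by
    change psi _ = _ at hψb
    rw [hψb]; exact div_pos hCy (by linarith)
  dsimp only
  rw [mul_eq_div_psi_div_self hC.ne' hx.ne' (by linarith) hψa,
    mul_eq_div_psi_div_self hC.ne' hy.ne' (by linarith) hψb]
  exact div_le_div_of_nonneg_left hC.le hquot_pos (psi_div_self_monotoneOn hb1 ha1 hba)
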